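/- For every integer n ≥ 8 that is not of the form 2^{2k+1} - 1 for some integer k ≥ 1, we have S(n)/√n < √2. -/

import Mathlib

/-- `inv2 n` is the number of inversions in the binary representation of `n`,
i.e. the number of pairs of bit positions `a > b` such that bit `a` of `n` is `1`
and bit `b` of `n` is `0`. -/
def inv2 (n : ℕ) : ℕ :=
  ((Finset.range (n + 1) ×ˢ Finset.range (n + 1)).filter
    (fun p => p.2 < p.1 ∧ n.testBit p.1 = true ∧ n.testBit p.2 = false)).card

/-- `iSeq n = (-1)^(inv2 n)`. -/
def iSeq (n : ℕ) : ℤ := (-1) ^ inv2 n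


/-- The summatory function `S N = ∑_{0 ≤ n ≤ N} iSeq n`. -/
def S (N : ℕ) : ℤ := ∑ n ∈ Finset.range (N + 1), iSeq n

/-!
Let `A M = ∑_{n<M} i_n` and `B M = ∑_{n<M} i_n t_n`, where `t_n` is the Thue–Morse sign, so that
`S n = A (n + 1)`. Appending a binary digit gives `i_{2m+1} = i_m` and `i_{2m} = i_m t_m` (a
trailing `0` forms an inversion with every `1`), whence `A (2M) = A M + B M` and
`B (2M) = A M - B M`: the point `(A, B)` is rotated and scaled by `√2`, so the defect
`2M - A² - B²` doubles, while an odd step changes it by a term linear in `A` and `B`. A few linear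
inequalities between `A`, `B` and the defect, chosen according to the signs `(i_M, t_M)`, are
preserved by both steps. They force `A M ^ 2 ≤ 2M - 3` for `M ≥ 9`, except on the orbit
`M = 2 · 4^k` of `M = 2`, where `B = 0` and the defect vanishes; these are exactly
`n = 2^(2k+1) - 1`.
-/

open Finset

def inversionPairs (n : ℕ) : Finset (ℕ × ℕ) :=
  (range (n + 1) ×ˢ range (n + 1)).filter
    (fun p => p.2 < p.1 ∧ n.testBit p.1 = true ∧ n.testBit p.2 = false)

lemma inv2_eq_card_inversionPairs (n : ℕ) : inv2 n = (inversionPairs n).card := rfl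

lemma mem_inversionPairs {n a b : ℕ} :
    (a, b) ∈ inversionPairs n ↔ b < a ∧ a ∈ n.bitIndices ∧ b ∉ n.bitIndices := by
  simp only [inversionPairs, mem_filter, mem_product, mem_range, Nat.mem_bitIndices,
    Bool.not_eq_true]
  constructor
  · exact fun h => h.2
  · rintro ⟨hba, ha, hb⟩
    have : a < n := (Nat.lt_two_pow_self).trans_le (Nat.ge_two_pow_of_testBit ha)
    exact ⟨⟨by omega, by omega⟩, hba, ha, hb⟩

def succPair : ℕ × ℕ ↪ ℕ × ℕ := (addRightEmbedding 1).prodMap (addRightEmbedding 1)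

lemma inversionPairs_two_mul_add_one (m : ℕ) :
    inversionPairs (2 * m + 1) = (inversionPairs m).map succPair := by
  ext ⟨_ | a, _ | b⟩ <;> simp [mem_inversionPairs, succPair]

lemma inversionPairs_two_mul (m : ℕ) :
    inversionPairs (2 * m) =
      (inversionPairs m).map succPair ∪ (2 * m).bitIndices.toFinset ×ˢ {0} := by
  ext ⟨_ | a, _ | b⟩ <;> simp [mem_inversionPairs, succPair]

lemma inv2_two_mul_add_one (m : ℕ) : inv2 (2 * m + 1) = inv2 m := by
  simp [inv2_eq_card_inversionPairs, inversionPairs_two_mul_add_one]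

lemma inv2_two_mul (m : ℕ) : inv2 (2 * m) = inv2 m + m.bitIndices.length := by
  rw [inv2_eq_card_inversionPairs, inversionPairs_two_mul, card_union_of_disjoint, card_map,
    card_product, List.toFinset_card_of_nodup Nat.bitIndices_nodup, inv2_eq_card_inversionPairs]
  · simp
  · simp only [disjoint_left, mem_map, mem_product, mem_singleton]
    rintro _ ⟨_, -, rfl⟩ ⟨-, h⟩
    simp [succPair] at h

def thueMorse (n : ℕ) : ℤ := (-1) ^ n.bitIndices.length

lemma iSeq_eq_one_or (n : ℕ) : iSeq n = 1 ∨ iSeq n = -1 := neg_one_pow_eq_or ℤ _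

lemma thueMorse_eq_one_or (n : ℕ) : thueMorse n = 1 ∨ thueMorse n = -1 := neg_one_pow_eq_or ℤ _

lemma thueMorse_two_mul (m : ℕ) : thueMorse (2 * m) = thueMorse m := by
  simp [thueMorse]

lemma thueMorse_two_mul_add_one (m : ℕ) : thueMorse (2 * m + 1) = -thueMorse m := by
  simp [thueMorse, pow_succ]

lemma iSeq_two_mul (m : ℕ) : iSeq (2 * m) = iSeq m * thueMorse m := by
  rw [iSeq, inv2_two_mul, pow_add, iSeq, thueMorse]

lemma iSeq_two_mul_add_one (m : ℕ) : iSeq (2 * m + 1) = iSeq m := by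
  rw [iSeq, inv2_two_mul_add_one, iSeq]

lemma sum_range_two_mul {β : Type*} [AddCommMonoid β] (f : ℕ → β) (n : ℕ) :
    ∑ k ∈ range (2 * n), f k = ∑ k ∈ range n, (f (2 * k) + f (2 * k + 1)) := by
  induction n with
  | zero => simp
  | succ n ih =>
    rw [mul_add, mul_one, sum_range_succ, sum_range_succ, sum_range_succ, ih, add_assoc]

def signSum (M : ℕ) : ℤ := ∑ n ∈ range M, iSeq n

def twistedSum (M : ℕ) : ℤ := ∑ n ∈ range M, iSeq n * thueMorse n

def defect (M : ℕ) : ℤ := 2 * M - signSum M ^ 2 - twistedSum M ^ 2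

lemma thueMorse_mul_self (n : ℕ) : thueMorse n * thueMorse n = 1 := by
  rw [thueMorse, ← pow_add, ← two_mul, pow_mul]; norm_num

lemma iSeq_mul_self (n : ℕ) : iSeq n * iSeq n = 1 := by
  rw [iSeq, ← pow_add, ← two_mul, pow_mul]; norm_num

lemma signSum_two_mul (M : ℕ) : signSum (2 * M) = signSum M + twistedSum M := by
  simp only [signSum, twistedSum, sum_range_two_mul, ← sum_add_distrib]
  refine sum_congr rfl fun n _ => ?_
  rw [iSeq_two_mul, iSeq_two_mul_add_one, add_comm]

lemma twistedSum_two_mul (M : ℕ) : twistedSum (2 * M) = signSum M - twistedSum M := by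
  simp only [signSum, twistedSum, sum_range_two_mul, ← sum_sub_distrib]
  refine sum_congr rfl fun n _ => ?_
  rw [iSeq_two_mul, iSeq_two_mul_add_one, thueMorse_two_mul, thueMorse_two_mul_add_one,
    mul_assoc, thueMorse_mul_self]
  ring

lemma signSum_two_mul_add_one (M : ℕ) :
    signSum (2 * M + 1) = signSum M + twistedSum M + iSeq M * thueMorse M := by
  rw [signSum, sum_range_succ, ← signSum, signSum_two_mul, iSeq_two_mul]

lemma twistedSum_two_mul_add_one (M : ℕ) :
    twistedSum (2 * M + 1) = signSum M - twistedSum M + iSeq M := by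
  rw [twistedSum, sum_range_succ, ← twistedSum, twistedSum_two_mul, iSeq_two_mul,
    thueMorse_two_mul, mul_assoc, thueMorse_mul_self, mul_one]

lemma defect_two_mul (M : ℕ) : defect (2 * M) = 2 * defect M := by
  simp only [defect, signSum_two_mul, twistedSum_two_mul]
  push_cast
  ring

lemma defect_two_mul_add_one (M : ℕ) :
    defect (2 * M + 1) = 2 * defect M - 2 * iSeq M *
      (thueMorse M * (signSum M + twistedSum M) + signSum M - twistedSum M) := by
  simp only [defect, signSum_two_mul_add_one, twistedSum_two_mul_add_one]
  push_cast
  linear_combination (-1 - thueMorse M * thueMorse M) * iSeq_mul_self M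
    - thueMorse_mul_self M

-- `a`, `b`, `d` stand for `signSum M`, `twistedSum M`, `defect M`; the signs `i = iSeq M` and
-- `t = thueMorse M` select the clause that applies.
def WalkInvariant (M : ℕ) (i t a b d : ℤ) : Prop :=
  0 ≤ b ∧ b ≤ a ∧ 0 ≤ d ∧
  (i = 1 → t = 1 → 2 * a + 2 ≤ d ∧ 2 * a + 2 * b ≤ d) ∧
  (i = 1 → t = -1 → 1 ≤ b ∧ 2 * (a - b) ≤ d ∧ (d ≤ 1 → ∃ k, M = 4 ^ k)) ∧
  (i = -1 → t = -1 → b + 2 ≤ a ∧ 4 * b ≤ d ∧ (d ≤ 2 → ∃ k, M = 2 * 4 ^ k)) ∧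
  (i = -1 → t = 1 → 1 ≤ b ∧ b + 2 ≤ a ∧ (b ≤ 1 → d ≤ 1 → a ≤ 3))

namespace WalkInvariant

variable {M : ℕ} {i t a b d : ℤ}

lemma two_mul (hi : i = 1 ∨ i = -1) (ht : t = 1 ∨ t = -1)
    (h : WalkInvariant M i t a b d) :
    WalkInvariant (2 * M) (i * t) t (a + b) (a - b) (2 * d) := by
  rcases hi with rfl | rfl <;> rcases ht with rfl | rfl <;> norm_num [WalkInvariant] at h ⊢ <;>
    and_intros <;> intros <;> try omega
  -- the exceptional orbit alternates between `4 ^ k` in state `(1, -1)`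
  -- and `2 * 4 ^ k` in state `(-1, -1)`
  · obtain ⟨-, -, -, -, -, hpow⟩ := h
    exact hpow (by omega)
  · obtain ⟨-, -, -, -, -, hpow⟩ := h
    obtain ⟨k, rfl⟩ := hpow (by omega)
    exact ⟨k + 1, by ring⟩

lemma two_mul_add_one (hi : i = 1 ∨ i = -1) (ht : t = 1 ∨ t = -1)
    (h : WalkInvariant M i t a b d) :
    WalkInvariant (2 * M + 1) i (-t) (a + b + i * t) (a - b + i)
      (2 * d - 2 * i * (t * (a + b) + a - b)) := by
  rcases hi with rfl | rfl <;> rcases ht with rfl | rfl <;> norm_num [WalkInvariant] at h ⊢ <;>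
    and_intros <;> intros <;> omega

lemma sq_add_three_le (hi : i = 1 ∨ i = -1) (ht : t = 1 ∨ t = -1)
    (h : WalkInvariant M i t a b d) (hd : d = 2 * M - a ^ 2 - b ^ 2) (hM : 9 ≤ M)
    (hM' : ∀ k, M ≠ 2 * 4 ^ k) : a ^ 2 + 3 ≤ 2 * M := by
  rcases hi with rfl | rfl <;> rcases ht with rfl | rfl <;> norm_num [WalkInvariant] at h
  · nlinarith
  · nlinarith
  · obtain ⟨-, -, hd0, hb, hba, hsmall⟩ := h
    by_contra! hlt
    have hb1 : b = 1 := by nlinarith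
    have ha : a ≤ 3 := hsmall hb1.le (by nlinarith)
    nlinarith
  · obtain ⟨hb, -, -, -, hbd, hexc⟩ := h
    by_contra! hlt
    obtain ⟨k, rfl⟩ := hexc (by nlinarith)
    exact hM' k rfl

end WalkInvariant

lemma walkInvariant_one :
    WalkInvariant 1 (iSeq 1) (thueMorse 1) (signSum 1) (twistedSum 1) (defect 1) := by
  have hi : iSeq 1 = 1 := by decide
  have ht : thueMorse 1 = -1 := by simp [thueMorse]
  have hs : signSum 1 = 1 := by decide
  have hv : twistedSum 1 = 1 := by simp [twistedSum, thueMorse, iSeq, inv2]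
  simp only [defect, hi, ht, hs, hv, WalkInvariant]
  norm_num
  exact ⟨0, rfl⟩

lemma walkInvariant_of_pos (M : ℕ) (hM : 0 < M) :
    WalkInvariant M (iSeq M) (thueMorse M) (signSum M) (twistedSum M) (defect M) := by
  induction M using Nat.strong_induction_on with
  | _ M ih =>
  obtain ⟨m, rfl | rfl⟩ := Nat.even_or_odd' M
  · rw [signSum_two_mul, twistedSum_two_mul, defect_two_mul, iSeq_two_mul, thueMorse_two_mul]
    exact (ih m (by omega) (by omega)).two_mul (iSeq_eq_one_or m) (thueMorse_eq_one_or m)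
  · rcases Nat.eq_zero_or_pos m with rfl | hm
    · exact walkInvariant_one
    rw [signSum_two_mul_add_one, twistedSum_two_mul_add_one, defect_two_mul_add_one,
      iSeq_two_mul_add_one, thueMorse_two_mul_add_one]
    exact (ih m (by omega) hm).two_mul_add_one (iSeq_eq_one_or m) (thueMorse_eq_one_or m)

theorem summatory_strict_upper_bound (n : ℕ) (hn : 8 ≤ n)
    (h : ¬ ∃ k : ℕ, 1 ≤ k ∧ n = 2 ^ (2 * k + 1) - 1) :
    (S n : ℝ) / Real.sqrt n < Real.sqrt 2 := by
  have hexc : ∀ k, n + 1 ≠ 2 * 4 ^ k := by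
    rintro k hk
    refine h ⟨k, ?_, ?_⟩
    · rcases k with _ | k <;> omega
    · rw [pow_succ, pow_mul]; norm_num; omega
  have hsq : S n ^ 2 + 3 ≤ 2 * (n + 1) := by
    exact_mod_cast (walkInvariant_of_pos (n + 1) n.succ_pos).sq_add_three_le (iSeq_eq_one_or _)
      (thueMorse_eq_one_or _) rfl (by omega) hexc
  have hn0 : (0 : ℝ) < n := by positivity
  rw [div_lt_iff₀ (Real.sqrt_pos.2 hn0), ← Real.sqrt_mul zero_le_two]
  refine Real.lt_sqrt_of_sq_lt ?_
  exact_mod_cast (show S n ^ 2 < 2 * (n : ℤ) by linarith)
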